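/- For all real θ, δf, δr and positive constants r, a, b with A = a/(2a² + 2b²), the 3×3 matrix JᵀWJ, where J is the 6×3 kinematic Jacobian with first column ((cos(δf+θ)+cos(δr+θ))/2, (sin(δf+θ)+sin(δr+θ))/2, A(sin δf − sin δr), 1/r, 0, 0)ᵀ, second column e₅, third column e₆, and W = diag(1,1,1,r²,1,1), is diagonal with entries S, 1, 1 where S = (1 + cos(δf − δr))/2 + A²(sin δf − sin δr)² + 1. Consequently the largest eigenvalue of JᵀWJ equals max(S, 1) ≤ 2 + 4A². -/

import Mathlib

/-!
Only the first column of `J` is non-trivial, and it is `W`-orthogonal to the unit columns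
`e₅, e₆`, so `JᵀWJ` is diagonal. Its `(0,0)` entry is the `W`-norm of the first column: the weight
`r²` cancels the wheel-spin entry `1/r`, and the averaged heading vector has squared length
`(1 + cos (δf - δr)) / 2` by the addition formula for the cosine. Bounding that by `1` and
`(sin δf - sin δr)²` by `4` gives `S ≤ 2 + 4A²`.
-/

open Matrix Module.End

lemma hasEigenvalue_toLin'_diagonal_vec3_iff {R : Type*} [CommRing R] [IsDomain R]
    (x y : R) {μ : R} :
    HasEigenvalue (toLin' (diagonal ![x, y, y])) μ ↔ μ = x ∨ μ = y := by
  rw [hasEigenvalue_toLin'_diagonal_iff, Fin.exists_fin_succ, Fin.exists_fin_two]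
  simp [eq_comm]

lemma half_sum_cos_sq_add_half_sum_sin_sq (α β : ℝ) :
    ((Real.cos α + Real.cos β) / 2) ^ 2 + ((Real.sin α + Real.sin β) / 2) ^ 2
      = (1 + Real.cos (α - β)) / 2 := by
  rw [Real.cos_sub]
  linear_combination (Real.sin_sq_add_cos_sq α + Real.sin_sq_add_cos_sq β) / 4

lemma sq_sin_sub_sin_le_four (x y : ℝ) : (Real.sin x - Real.sin y) ^ 2 ≤ 4 := by
  have h : |Real.sin x - Real.sin y| ≤ 2 := by
    linarith [abs_sub (Real.sin x) (Real.sin y), Real.abs_sin_le_one x, Real.abs_sin_le_one y]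
  nlinarith [abs_nonneg (Real.sin x - Real.sin y), sq_abs (Real.sin x - Real.sin y)]

noncomputable def kinematicJacobian (A r θ δf δr : ℝ) : Matrix (Fin 6) (Fin 3) ℝ :=
  Matrix.of fun i j =>
    if j = 0 then
      ![(Real.cos (δf + θ) + Real.cos (δr + θ)) / 2,
        (Real.sin (δf + θ) + Real.sin (δr + θ)) / 2,
        A * (Real.sin δf - Real.sin δr), 1 / r, 0, 0] i
    else if j = 1 then (if i = 4 then 1 else 0)
    else (if i = 5 then 1 else 0)

lemma kinematicJacobian_transpose_mul_diagonal_mul_self (A r θ δf δr : ℝ) (hr : r ≠ 0) :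
    (kinematicJacobian A r θ δf δr)ᵀ * diagonal ![1, 1, 1, r ^ 2, 1, 1]
        * kinematicJacobian A r θ δf δr
      = diagonal ![(1 + Real.cos (δf - δr)) / 2 + A ^ 2 * (Real.sin δf - Real.sin δr) ^ 2 + 1,
          1, 1] := by
  have hheading := half_sum_cos_sq_add_half_sum_sin_sq (δf + θ) (δr + θ)
  rw [add_sub_add_right_eq_sub] at hheading
  have hwheel : r⁻¹ * r ^ 2 * r⁻¹ = 1 := by field_simp
  ext i j
  fin_cases i <;> fin_cases j <;>
    simp [kinematicJacobian, Matrix.mul_apply, Fin.sum_univ_six, diagonal]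
  linear_combination hheading + hwheel

theorem stmt_5_general (θ δf δr r a b : ℝ) (hr : 0 < r) :
    let A : ℝ := a / (2 * a ^ 2 + 2 * b ^ 2)
    let S : ℝ := (1 + Real.cos (δf - δr)) / 2
        + A ^ 2 * (Real.sin δf - Real.sin δr) ^ 2 + 1
    let J : Matrix (Fin 6) (Fin 3) ℝ := Matrix.of (fun i j =>
      if j = 0 then
        ![(Real.cos (δf + θ) + Real.cos (δr + θ)) / 2,
          (Real.sin (δf + θ) + Real.sin (δr + θ)) / 2,
          A * (Real.sin δf - Real.sin δr), 1 / r, 0, 0] i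
      else if j = 1 then (if i = 4 then 1 else 0)
      else (if i = 5 then 1 else 0))
    let W : Matrix (Fin 6) (Fin 6) ℝ := Matrix.diagonal ![1, 1, 1, r ^ 2, 1, 1]
    Jᵀ * W * J = Matrix.diagonal ![S, 1, 1] ∧
    (∀ μ : ℝ, Module.End.HasEigenvalue (Matrix.toLin' (Jᵀ * W * J)) μ → μ ≤ max S 1) ∧
    Module.End.HasEigenvalue (Matrix.toLin' (Jᵀ * W * J)) (max S 1) ∧
    max S 1 ≤ 2 + 4 * A ^ 2 := by
  intro A S J W
  have hgram : Jᵀ * W * J = diagonal ![S, 1, 1] :=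
    kinematicJacobian_transpose_mul_diagonal_mul_self A r θ δf δr hr.ne'
  have heig (μ : ℝ) : HasEigenvalue (toLin' (Jᵀ * W * J)) μ ↔ μ = S ∨ μ = 1 :=
    hgram ▸ hasEigenvalue_toLin'_diagonal_vec3_iff S 1
  refine ⟨hgram, fun μ hμ => ?_, (heig _).2 (max_choice S 1), ?_⟩
  · rcases (heig μ).1 hμ with rfl | rfl
    exacts [le_max_left _ _, le_max_right _ _]
  · have hsin := mul_le_mul_of_nonneg_left (sq_sin_sub_sin_le_four δf δr) (sq_nonneg A)
    have hA : 0 ≤ A ^ 2 := sq_nonneg A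
    have hcos := Real.cos_le_one (δf - δr)
    exact max_le (by simp only [S]; linarith) (by linarith)

/-- Property 6 (induced-gain computation): JᵀWJ is diagonal with entries (S,1,1) and its
largest eigenvalue is max(S,1) ≤ 2 + 4A². -/
theorem stmt_5 (θ δf δr r a b : ℝ) (hr : 0 < r) (ha : 0 < a) (hb : 0 < b) :
    let A : ℝ := a / (2 * a ^ 2 + 2 * b ^ 2)
    let S : ℝ := (1 + Real.cos (δf - δr)) / 2
        + A ^ 2 * (Real.sin δf - Real.sin δr) ^ 2 + 1
    let J : Matrix (Fin 6) (Fin 3) ℝ := Matrix.of (fun i j =>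
      if j = 0 then
        ![(Real.cos (δf + θ) + Real.cos (δr + θ)) / 2,
          (Real.sin (δf + θ) + Real.sin (δr + θ)) / 2,
          A * (Real.sin δf - Real.sin δr), 1 / r, 0, 0] i
      else if j = 1 then (if i = 4 then 1 else 0)
      else (if i = 5 then 1 else 0))
    let W : Matrix (Fin 6) (Fin 6) ℝ := Matrix.diagonal ![1, 1, 1, r ^ 2, 1, 1]
    Jᵀ * W * J = Matrix.diagonal ![S, 1, 1] ∧
    (∀ μ : ℝ, Module.End.HasEigenvalue (Matrix.toLin' (Jᵀ * W * J)) μ → μ ≤ max S 1) ∧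
    Module.End.HasEigenvalue (Matrix.toLin' (Jᵀ * W * J)) (max S 1) ∧
    max S 1 ≤ 2 + 4 * A ^ 2 :=
  stmt_5_general θ δf δr r a b hr
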